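/- arXiv:2102.07139 — 9 statements merged into one kernel-verified Lean document; each statement's English description precedes it below -/
import Mathlib

section
/- Let n be a natural number, let f : (Fin n → ℝ) → (Fin n → ℝ) be a vector field, let A be a symmetric n×n real matrix, and let b ∈ Fin n → ℝ. Define G(z) = ∑ i, z i * (A.mulVec z) i + ∑ i, b i * z i. Assume G is a conserved quantity of the dynamics ż = f(z), i.e. for every z, ∑ i, (2 * (A.mulVec z) i + b i) * (f z) i = 0. Then for every step size ε ∈ ℝ and every z, z' ∈ Fin n → ℝ satisfying the implicit midpoint equation z' = z + ε • f((z + z') / 2), one has G(z') = G(z). -/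
/-- **Theorem 2 of the paper.** The implicit midpoint integrator exactly preserves
conserved quantities of the form `G(z) = zᵀAz + bᵀz` with `A` symmetric. -/
theorem implicit_midpoint_preserves_quadratic_invariants
    (n : ℕ) (f : (Fin n → ℝ) → (Fin n → ℝ))
    (A : Matrix (Fin n) (Fin n) ℝ) (hA : A.IsSymm) (b : Fin n → ℝ)
    (hcons : ∀ z : Fin n → ℝ, ∑ i, (2 * A.mulVec z i + b i) * f z i = 0)
    (ε : ℝ) (z z' : Fin n → ℝ)
    (hstep : z' = z + ε • f ((z + z') / 2)) :
    (∑ i, z' i * A.mulVec z' i) + (∑ i, b i * z' i)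
      = (∑ i, z i * A.mulVec z i) + (∑ i, b i * z i) := by
  set w := f ((z + z') / 2) with hw
  have hz' : ∀ i, z' i = z i + ε * w i := by
    intro i
    rw [hstep]; simp
  have hAz' : ∀ i, A.mulVec z' i = A.mulVec z i + ε * A.mulVec w i := by
    intro i
    rw [hstep, Matrix.mulVec_add, Matrix.mulVec_smul]
    simp
  have hmid : (z + z') / 2 = z + (ε/2) • w := by
    funext i
    have h2 : (2 : Fin n → ℝ) i = 2 := rfl
    simp only [Pi.div_apply, Pi.add_apply, Pi.smul_apply, smul_eq_mul, hz' i, h2]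
    ring
  have hc := hcons ((z + z') / 2)
  rw [← hw] at hc
  have hAm : ∀ i, A.mulVec ((z + z') / 2) i = A.mulVec z i + (ε/2) * A.mulVec w i := by
    intro i
    rw [hmid, Matrix.mulVec_add, Matrix.mulVec_smul]
    simp
  have hc2 : 2 * (∑ i, w i * A.mulVec z i) + ε * (∑ i, w i * A.mulVec w i)
      + (∑ i, b i * w i) = 0 := by
    have := hc
    calc 2 * (∑ i, w i * A.mulVec z i) + ε * (∑ i, w i * A.mulVec w i)
          + (∑ i, b i * w i)
        = ∑ i, (2 * A.mulVec ((z + z') / 2) i + b i) * w i := by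
          rw [Finset.mul_sum, Finset.mul_sum, ← Finset.sum_add_distrib,
            ← Finset.sum_add_distrib]
          refine Finset.sum_congr rfl fun i _ => ?_
          rw [hAm i]; ring
      _ = 0 := hc
  have hsymm : ∑ i, w i * A.mulVec z i = ∑ i, z i * A.mulVec w i := by
    have h1 : dotProduct w (A.mulVec z) = dotProduct z (A.mulVec w) := by
      rw [Matrix.dotProduct_mulVec, ← Matrix.mulVec_transpose, hA.eq,
        dotProduct_comm]
    simpa [dotProduct] using h1
  have hexp : (∑ i, z' i * A.mulVec z' i) + (∑ i, b i * z' i)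
      = (∑ i, z i * A.mulVec z i) + (∑ i, b i * z i)
        + ε * ((∑ i, w i * A.mulVec z i) + (∑ i, z i * A.mulVec w i)
          + ε * (∑ i, w i * A.mulVec w i) + (∑ i, b i * w i)) := by
    have h1 : ∑ i, z' i * A.mulVec z' i
        = ∑ i, (z i * A.mulVec z i + ε * (w i * A.mulVec z i)
            + ε * (z i * A.mulVec w i) + ε * (ε * (w i * A.mulVec w i))) := by
      refine Finset.sum_congr rfl fun i _ => ?_
      rw [hz' i, hAz' i]; ring
    have h2 : ∑ i, b i * z' i = ∑ i, (b i * z i + ε * (b i * w i)) := by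
      refine Finset.sum_congr rfl fun i _ => ?_
      rw [hz' i]; ring
    rw [h1, h2]
    simp only [Finset.sum_add_distrib, ← Finset.mul_sum]
    ring
  rw [hexp, hsymm]
  rw [hsymm] at hc2
  linear_combination ε * hc2
end

section
/- Let m be a natural number and let H : EuclideanSpace ℝ (Fin m) × EuclideanSpace ℝ (Fin m) → ℝ be a differentiable function of (q,p). Write ∇_q H(q,p) for the gradient at q of the map q' ↦ H(q',p) and ∇_p H(q,p) for the gradient at p of the map p' ↦ H(q,p'). Let A be a symmetric m×m real matrix (acting on EuclideanSpace ℝ (Fin m) by matrix–vector multiplication) and b₁, b₂ ∈ EuclideanSpace ℝ (Fin m). Assume the conservation identity: for all (q,p), ⟪A p + b₁, ∇_p H(q,p)⟫ = ⟪A q + b₂, ∇_q H(q,p)⟫ (this says G(q,p) = ⟪q, A p⟫ + ⟪b₁, q⟫ + ⟪b₂, p⟫ is conserved along the Hamiltonian flow q̇ = ∇_p H, ṗ = −∇_q H). Suppose ε ∈ ℝ and the points q, p, p̄, q', p' satisfy the generalized leapfrog equations: p̄ = p − (ε/2) • ∇_q H(q, p̄), q' = q + (ε/2) • (∇_p H(q,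 p̄) + ∇_p H(q', p̄)), and p' = p̄ − (ε/2) • ∇_q H(q', p̄). Then ⟪q', A p'⟫ + ⟪b₁, q'⟫ + ⟪b₂, p'⟫ = ⟪q, A p⟫ + ⟪b₁, q⟫ + ⟪b₂, p⟫. -/
open RealInnerProductSpace

/-!
Write `G(q, p) = ⟪q, A p⟫ + ⟪b₁, q⟫ + ⟪b₂, p⟫`. `G` is affine in each argument separately, with
partial gradients `A p + b₁` in `q` and, `A` being symmetric, `A q + b₂` in `p`. Each substep of
the leapfrog integrator changes only one argument:
`(q, p) ↦ (q, p̄) ↦ (q', p̄) ↦ (q', p')`. The three increments of `G` are therefore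
`-(ε/2)⟪A q + b₂, ∇_q H(q, p̄)⟫`, `(ε/2)⟪A p̄ + b₁, ∇_p H(q, p̄) + ∇_p H(q', p̄)⟫` and
`-(ε/2)⟪A q' + b₂, ∇_q H(q', p̄)⟫`, and they cancel by the conservation identity at `(q, p̄)` and
at `(q', p̄)`.
-/

section BilinearInvariant

variable {E : Type*} [NormedAddCommGroup E] [InnerProductSpace ℝ E]

def bilinearInvariant (A : E →ₗ[ℝ] E) (b₁ b₂ q p : E) : ℝ :=
  ⟪q, A p⟫ + ⟪b₁, q⟫ + ⟪b₂, p⟫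

variable {A : E →ₗ[ℝ] E} {b₁ b₂ : E}

theorem bilinearInvariant_sub_left (q₀ q₁ p : E) :
    bilinearInvariant A b₁ b₂ q₁ p - bilinearInvariant A b₁ b₂ q₀ p = ⟪A p + b₁, q₁ - q₀⟫ := by
  simp only [bilinearInvariant, inner_add_left, inner_sub_right, real_inner_comm (A p)]
  ring

theorem bilinearInvariant_sub_right (hA : A.IsSymmetric) (q p₀ p₁ : E) :
    bilinearInvariant A b₁ b₂ q p₁ - bilinearInvariant A b₁ b₂ q p₀ = ⟪A q + b₂, p₁ - p₀⟫ := by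
  simp only [bilinearInvariant, inner_add_left, inner_sub_right, hA q]
  ring

theorem bilinearInvariant_leapfrog (hA : A.IsSymmetric) {gradq gradp : E → E → E}
    (hcons : ∀ q p, ⟪A p + b₁, gradp q p⟫ = ⟪A q + b₂, gradq q p⟫)
    {ε : ℝ} {q p pbar q' p' : E}
    (h1 : pbar = p - (ε / 2) • gradq q pbar)
    (h2 : q' = q + (ε / 2) • (gradp q pbar + gradp q' pbar))
    (h3 : p' = pbar - (ε / 2) • gradq q' pbar) :
    bilinearInvariant A b₁ b₂ q' p' = bilinearInvariant A b₁ b₂ q p := by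
  set G := bilinearInvariant A b₁ b₂
  have dp₁ : pbar - p = -((ε / 2) • gradq q pbar) := by nth_rw 1 [h1]; abel
  have dq : q' - q = (ε / 2) • (gradp q pbar + gradp q' pbar) := by nth_rw 1 [h2]; abel
  have dp₂ : p' - pbar = -((ε / 2) • gradq q' pbar) := by rw [h3]; abel
  have half_kick₁ : G q pbar - G q p = -(ε / 2 * ⟪A q + b₂, gradq q pbar⟫) := by
    rw [bilinearInvariant_sub_right hA, dp₁, inner_neg_right, real_inner_smul_right]
  have drift : G q' pbar - G q pbar =
      ε / 2 * (⟪A pbar + b₁, gradp q pbar⟫ + ⟪A pbar + b₁, gradp q' pbar⟫) := by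
    rw [bilinearInvariant_sub_left, dq, real_inner_smul_right, inner_add_right]
  have half_kick₂ : G q' p' - G q' pbar = -(ε / 2 * ⟪A q' + b₂, gradq q' pbar⟫) := by
    rw [bilinearInvariant_sub_right hA, dp₂, inner_neg_right, real_inner_smul_right]
  linear_combination half_kick₁ + drift + half_kick₂ + ε / 2 * (hcons q pbar + hcons q' pbar)

end BilinearInvariant

theorem generalized_leapfrog_preserves_bilinear_invariants_general
    (m : ℕ)
    (A : Matrix (Fin m) (Fin m) ℝ) (hA : A.IsSymm)
    (b₁ b₂ : EuclideanSpace ℝ (Fin m))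
    (Amap : EuclideanSpace ℝ (Fin m) → EuclideanSpace ℝ (Fin m))
    (hAmap : ∀ v, Amap v = (EuclideanSpace.equiv (Fin m) ℝ).symm
      (A.mulVec (EuclideanSpace.equiv (Fin m) ℝ v)))
    (gradq gradp :
      EuclideanSpace ℝ (Fin m) → EuclideanSpace ℝ (Fin m) → EuclideanSpace ℝ (Fin m))
    (hcons : ∀ q p, ⟪Amap p + b₁, gradp q p⟫ = ⟪Amap q + b₂, gradq q p⟫)
    (ε : ℝ) (q p pbar q' p' : EuclideanSpace ℝ (Fin m))
    (h1 : pbar = p - (ε / 2) • gradq q pbar)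
    (h2 : q' = q + (ε / 2) • (gradp q pbar + gradp q' pbar))
    (h3 : p' = pbar - (ε / 2) • gradq q' pbar) :
    ⟪q', Amap p'⟫ + ⟪b₁, q'⟫ + ⟪b₂, p'⟫ = ⟪q, Amap p⟫ + ⟪b₁, q⟫ + ⟪b₂, p⟫ := by
  obtain rfl : Amap = A.toEuclideanLin := funext hAmap
  have hsymm : A.toEuclideanLin.IsSymmetric :=
    Matrix.isSymmetric_toEuclideanLin_iff.mpr (Matrix.isHermitian_iff_isSymm.mpr hA)
  exact bilinearInvariant_leapfrog hsymm hcons h1 h2 h3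

/-- **Theorem 1 of the paper.** The generalized leapfrog integrator (solved exactly)
preserves conserved quantities of the form `G(q,p) = ⟪q, A p⟫ + ⟪b₁, q⟫ + ⟪b₂, p⟫`
with `A` symmetric. -/
theorem generalized_leapfrog_preserves_bilinear_invariants
    (m : ℕ)
    (H : EuclideanSpace ℝ (Fin m) × EuclideanSpace ℝ (Fin m) → ℝ)
    (hH : Differentiable ℝ H)
    (A : Matrix (Fin m) (Fin m) ℝ) (hA : A.IsSymm)
    (b₁ b₂ : EuclideanSpace ℝ (Fin m))
    (Amap : EuclideanSpace ℝ (Fin m) → EuclideanSpace ℝ (Fin m))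
    (hAmap : ∀ v, Amap v = (EuclideanSpace.equiv (Fin m) ℝ).symm
      (A.mulVec (EuclideanSpace.equiv (Fin m) ℝ v)))
    (gradq gradp :
      EuclideanSpace ℝ (Fin m) → EuclideanSpace ℝ (Fin m) → EuclideanSpace ℝ (Fin m))
    (hgradq : ∀ q p, gradq q p = gradient (fun q'' => H (q'', p)) q)
    (hgradp : ∀ q p, gradp q p = gradient (fun p'' => H (q, p'')) p)
    (hcons : ∀ q p, ⟪Amap p + b₁, gradp q p⟫ = ⟪Amap q + b₂, gradq q p⟫)
    (ε : ℝ) (q p pbar q' p' : EuclideanSpace ℝ (Fin m))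
    (h1 : pbar = p - (ε / 2) • gradq q pbar)
    (h2 : q' = q + (ε / 2) • (gradp q pbar + gradp q' pbar))
    (h3 : p' = pbar - (ε / 2) • gradq q' pbar) :
    ⟪q', Amap p'⟫ + ⟪b₁, q'⟫ + ⟪b₂, p'⟫ = ⟪q, Amap p⟫ + ⟪b₁, q⟫ + ⟪b₂, p⟫ :=
  generalized_leapfrog_preserves_bilinear_invariants_general m A hA b₁ b₂ Amap hAmap gradq gradp
    hcons ε q p pbar q' p' h1 h2 h3
end

section
/- Let m be a natural number, let A be a symmetric (2m)×(2m) real matrix, and let S be the (2m)×(2m) block matrix S = fromBlocks 0 1 (−1) 0 (with m×m blocks). Consider the quadratic Hamiltonian H(z) = ∑ i, z i * (A.mulVec z) i on Fin (2m) → ℝ, whose Hamiltonian vector field is ż = 2 • (S * A).mulVec z. Then for every ε ∈ ℝ and every z, z' ∈ Fin (2m) → ℝ satisfying the implicit midpoint equation z' = z + ε • (S * A).mulVec (z + z') (i.e. z' = z + ε · 2SA · ((z+z')/2)), one has H(z') = H(z). -/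
open Matrix

lemma skew_quad_zero {n : Type*} [Fintype n] (M : Matrix n n ℝ)
    (hM : Mᵀ = -M) (x : n → ℝ) : x ⬝ᵥ M.mulVec x = 0 := by
  have h1 : x ⬝ᵥ M.mulVec x = x ⬝ᵥ Mᵀ.mulVec x := by
    rw [dotProduct_mulVec, ← mulVec_transpose, dotProduct_comm]
  rw [hM] at h1
  simp only [neg_mulVec, dotProduct_neg] at h1
  linarith

/-- A single exact implicit midpoint step conserves a quadratic Hamiltonian
`H(z) = zᵀAz` (`A` symmetric) for the Hamiltonian vector field `ż = 2SAz`,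
where `S = [[0, I], [-I, 0]]` is the standard symplectic matrix. -/
theorem implicit_midpoint_step_conserves_quadratic_hamiltonian
    (m : ℕ) (A : Matrix (Fin m ⊕ Fin m) (Fin m ⊕ Fin m) ℝ) (hA : A.IsSymm)
    (S : Matrix (Fin m ⊕ Fin m) (Fin m ⊕ Fin m) ℝ)
    (hS : S = Matrix.fromBlocks 0 1 (-1) 0)
    (ε : ℝ) (z z' : Fin m ⊕ Fin m → ℝ)
    (hstep : z' = z + ε • (S * A).mulVec (z + z')) :
    ∑ i, z' i * A.mulVec z' i = ∑ i, z i * A.mulVec z i := by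
  have hSt : Sᵀ = -S := by
    subst hS
    ext i j
    cases i <;> cases j <;> simp [Matrix.fromBlocks, Matrix.one_apply, eq_comm]
  have hskew : (A * S * A)ᵀ = -(A * S * A) := by
    rw [Matrix.transpose_mul, Matrix.transpose_mul, hSt, hA.eq]
    noncomm_ring
  have key : (z + z') ⬝ᵥ (A * S * A).mulVec (z + z') = 0 :=
    skew_quad_zero _ hskew _
  have hd : z' - z = ε • (S * A).mulVec (z + z') := by
    conv_lhs => rw [hstep]
    exact add_sub_cancel_left _ _
  -- symmetry of A:
  have hsym : ∀ u v : Fin m ⊕ Fin m → ℝ, u ⬝ᵥ A.mulVec v = v ⬝ᵥ A.mulVec u := by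
    intro u v
    rw [dotProduct_mulVec, dotProduct_comm, ← mulVec_transpose, hA.eq]
  show z' ⬝ᵥ A.mulVec z' = z ⬝ᵥ A.mulVec z
  have expand : z' ⬝ᵥ A.mulVec z' - z ⬝ᵥ A.mulVec z
      = (z + z') ⬝ᵥ A.mulVec (z' - z) := by
    have h1 := hsym z z'
    simp only [add_dotProduct, Matrix.mulVec_sub, dotProduct_sub]
    linarith
  have final : (z + z') ⬝ᵥ A.mulVec (z' - z) = 0 := by
    rw [hd]
    rw [Matrix.mulVec_smul, dotProduct_smul]
    have : A.mulVec ((S * A).mulVec (z + z')) = (A * S * A).mulVec (z + z') := by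
      rw [Matrix.mulVec_mulVec, ← Matrix.mul_assoc]
    rw [this, key, smul_zero]
  linarith [expand, final]
end

section
/- Let m, N be natural numbers, let A be a symmetric (2m)×(2m) real matrix, let S = fromBlocks 0 1 (−1) 0 be the standard symplectic matrix with m×m blocks, and define H(z) = ∑ i, z i * (A.mulVec z) i. Let ε ∈ ℝ and let z : ℕ → (Fin (2m) → ℝ) be a trajectory such that for every k < N, z(k+1) = z(k) + ε • (S * A).mulVec (z(k) + z(k+1)) (i.e. each step is an exact implicit midpoint step for the Hamiltonian vector field ż = 2SAz). Then H(z(N)) = H(z(0)), and consequently the Metropolis acceptance probability min 1 (Real.exp (H(z(0)) − H(z(N)))) equals 1. -/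
open Matrix

lemma skew_quadratic_zero {n : Type*} [Fintype n] (M : Matrix n n ℝ) (h : Mᵀ = -M)
    (w : n → ℝ) : w ⬝ᵥ M.mulVec w = 0 := by
  have h1 : w ⬝ᵥ M.mulVec w = Mᵀ.mulVec w ⬝ᵥ w := by
    rw [Matrix.dotProduct_mulVec, ← Matrix.mulVec_transpose]
  rw [h] at h1
  simp [Matrix.neg_mulVec, dotProduct_comm] at h1
  linarith

lemma midpoint_step_conserves {n : Type*} [Fintype n] [DecidableEq n]
    (A S : Matrix n n ℝ) (hA : Aᵀ = A) (hS : Sᵀ = -S) (ε : ℝ) (x y : n → ℝ)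
    (h : y = x + ε • (S * A).mulVec (x + y)) :
    y ⬝ᵥ A.mulVec y = x ⬝ᵥ A.mulVec x := by
  set w := x + y with hw
  have hd : y - x = ε • (S * A).mulVec w := by
    rw [h]; abel
  have hdiff : y ⬝ᵥ A.mulVec y - x ⬝ᵥ A.mulVec x = (y - x) ⬝ᵥ A.mulVec w := by
    have hsym : x ⬝ᵥ A.mulVec y = y ⬝ᵥ A.mulVec x := by
      rw [Matrix.dotProduct_mulVec, ← Matrix.mulVec_transpose, hA, dotProduct_comm]
    simp only [hw, sub_dotProduct, mulVec_add, dotProduct_add]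
    linarith
  have hzero : (y - x) ⬝ᵥ A.mulVec w = 0 := by
    rw [hd, smul_dotProduct]
    have : ((S * A).mulVec w) ⬝ᵥ A.mulVec w = w ⬝ᵥ ((S * A)ᵀ * A).mulVec w := by
      rw [← Matrix.transpose_transpose (S * A), Matrix.mulVec_transpose,
        ← Matrix.dotProduct_mulVec, Matrix.mulVec_mulVec, Matrix.transpose_transpose]
    rw [this, skew_quadratic_zero ((S * A)ᵀ * A) (by
      simp [Matrix.transpose_mul, hA, hS, Matrix.mul_assoc, Matrix.neg_mul,
        Matrix.mul_neg]), smul_zero]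
  linarith

/-- **Proposition 1 of the paper.** An `N`-step exact implicit midpoint trajectory for a
quadratic Hamiltonian `H(z) = zᵀAz` conserves `H`, hence the HMC Metropolis acceptance
probability `min 1 (exp (H(z₀) − H(z_N)))` equals `1`. -/
theorem implicit_midpoint_hmc_always_accepts_quadratic
    (m N : ℕ) (A : Matrix (Fin m ⊕ Fin m) (Fin m ⊕ Fin m) ℝ) (hA : A.IsSymm)
    (S : Matrix (Fin m ⊕ Fin m) (Fin m ⊕ Fin m) ℝ)
    (hS : S = Matrix.fromBlocks 0 1 (-1) 0)
    (ε : ℝ) (z : ℕ → (Fin m ⊕ Fin m → ℝ))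
    (hstep : ∀ k < N, z (k + 1) = z k + ε • (S * A).mulVec (z k + z (k + 1))) :
    (∑ i, z N i * A.mulVec (z N) i = ∑ i, z 0 i * A.mulVec (z 0) i) ∧
    min 1 (Real.exp ((∑ i, z 0 i * A.mulVec (z 0) i)
        - ∑ i, z N i * A.mulVec (z N) i)) = 1 := by
  have hSskew : Sᵀ = -S := by
    rw [hS]; ext i j; rcases i with i|i <;> rcases j with j|j <;> simp [Matrix.fromBlocks, Matrix.one_apply, eq_comm]
  have key : ∀ k ≤ N, z k ⬝ᵥ A.mulVec (z k) = z 0 ⬝ᵥ A.mulVec (z 0) := by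
    intro k hk
    induction k with
    | zero => rfl
    | succ n ih =>
      rw [midpoint_step_conserves A S hA.eq hSskew ε (z n) (z (n + 1))
        (hstep n (by omega))]
      exact ih (by omega)
  have hmain : ∑ i, z N i * A.mulVec (z N) i = ∑ i, z 0 i * A.mulVec (z 0) i :=
    key N le_rfl
  refine ⟨hmain, ?_⟩
  rw [hmain, sub_self, Real.exp_zero, min_self]
end

section
/- Let m be a natural number and let H : EuclideanSpace ℝ (Fin m) × EuclideanSpace ℝ (Fin m) → ℝ be differentiable and even in the momentum variable: H(q, −p) = H(q, p) for all q, p. Write ∇_q H and ∇_p H for the partial gradients. Let ε ∈ ℝ and suppose (q', p') is an exact implicit midpoint step from (q, p): q' = q + ε • ∇_p H(q̄, p̄) and p' = p − ε • ∇_q H(q̄, p̄), where q̄ = (q + q')/2 and p̄ = (p + p')/2. Then (q, −p) is an exact implicit midpoint step of size ε from (q', −p'): q = q' + ε • ∇_p H((q' + q)/2, (−p' + (−p))/2) and −p = −p' − ε • ∇_q H((q' + q)/2, (−p' + (−p))/2). -/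
/-!
The midpoint of the reversed step `(q', -p') ↦ (q, -p)` is the midpoint `(q̄, p̄)` of the
forward step with its momentum negated. Since `H(q, ·)` is even, `∇_q H` is even and `∇_p H`
is odd in the momentum, so the reversed step evaluates the same two gradients, up to exactly
the signs that the momentum flip absorbs.
-/

theorem Function.Even.fderiv_neg {𝕜 E F : Type*} [NontriviallyNormedField 𝕜]
    [NormedAddCommGroup E] [NormedSpace 𝕜 E] [NormedAddCommGroup F] [NormedSpace 𝕜 F]
    {f : E → F} (hf : f.Even) (x : E) :
    fderiv 𝕜 f (-x) = -fderiv 𝕜 f x := by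
  have hcomp : f ∘ ContinuousLinearEquiv.neg 𝕜 = f := funext hf
  have hchain := (ContinuousLinearEquiv.neg 𝕜 (M := E)).comp_right_fderiv (f := f) (x := x)
  rw [hcomp] at hchain
  rw [hchain]
  ext v
  simp

theorem Function.Even.gradient_neg {𝕜 F : Type*} [RCLike 𝕜] [NormedAddCommGroup F]
    [InnerProductSpace 𝕜 F] [CompleteSpace F] {f : F → 𝕜} (hf : f.Even) (x : F) :
    gradient f (-x) = -gradient f x := by
  rw [gradient, gradient, hf.fderiv_neg, map_neg]

theorem implicitMidpoint_reverse_of_neg_momentum {R E : Type*} [Field R] [AddCommGroup E]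
    [Module R E] (Fq Fp : E → E → E) (hFq : ∀ a b, Fq a (-b) = Fq a b)
    (hFp : ∀ a b, Fp a (-b) = -Fp a b) (ε : R) (q p q' p' : E)
    (h1 : q' = q + ε • Fp ((2 : R)⁻¹ • (q + q')) ((2 : R)⁻¹ • (p + p')))
    (h2 : p' = p - ε • Fq ((2 : R)⁻¹ • (q + q')) ((2 : R)⁻¹ • (p + p'))) :
    q = q' + ε • Fp ((2 : R)⁻¹ • (q' + q)) ((2 : R)⁻¹ • (-p' + -p)) ∧
    -p = -p' - ε • Fq ((2 : R)⁻¹ • (q' + q)) ((2 : R)⁻¹ • (-p' + -p)) := by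
  have hmid : (2 : R)⁻¹ • (-p' + -p) = -((2 : R)⁻¹ • (p + p')) := by module
  rw [add_comm q' q, hmid, hFq, hFp]
  exact ⟨by linear_combination (norm := module) -h1, by linear_combination (norm := module) h2⟩

theorem implicit_midpoint_momentum_negation_symmetry_general
    (m : ℕ)
    (H : EuclideanSpace ℝ (Fin m) × EuclideanSpace ℝ (Fin m) → ℝ)
    (heven : ∀ q p : EuclideanSpace ℝ (Fin m), H (q, -p) = H (q, p))
    (gradq gradp :
      EuclideanSpace ℝ (Fin m) → EuclideanSpace ℝ (Fin m) → EuclideanSpace ℝ (Fin m))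
    (hgradq : ∀ q p, gradq q p = gradient (fun q'' => H (q'', p)) q)
    (hgradp : ∀ q p, gradp q p = gradient (fun p'' => H (q, p'')) p)
    (ε : ℝ) (q p q' p' : EuclideanSpace ℝ (Fin m))
    (h1 : q' = q + ε • gradp ((2 : ℝ)⁻¹ • (q + q')) ((2 : ℝ)⁻¹ • (p + p')))
    (h2 : p' = p - ε • gradq ((2 : ℝ)⁻¹ • (q + q')) ((2 : ℝ)⁻¹ • (p + p'))) :
    q = q' + ε • gradp ((2 : ℝ)⁻¹ • (q' + q)) ((2 : ℝ)⁻¹ • (-p' + -p)) ∧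
    -p = -p' - ε • gradq ((2 : ℝ)⁻¹ • (q' + q)) ((2 : ℝ)⁻¹ • (-p' + -p)) := by
  have hgradq_even : ∀ a b, gradq a (-b) = gradq a b := fun a b => by
    simp only [hgradq, heven]
  have hgradp_odd : ∀ a b, gradp a (-b) = -gradp a b := fun a b => by
    simpa only [hgradp] using Function.Even.gradient_neg (fun p'' => heven a p'') b
  exact implicitMidpoint_reverse_of_neg_momentum gradq gradp hgradq_even hgradp_odd ε q p q' p'
    h1 h2

/-- **Lemma A.1 of the paper** (momentum-negation symmetry / reversibility of the
implicit midpoint integrator). If `H` is even in the momentum and `(q', p')` is an exact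
implicit midpoint step of size `ε` from `(q, p)`, then `(q, −p)` is an exact implicit
midpoint step of size `ε` from `(q', −p')`. -/
theorem implicit_midpoint_momentum_negation_symmetry
    (m : ℕ)
    (H : EuclideanSpace ℝ (Fin m) × EuclideanSpace ℝ (Fin m) → ℝ)
    (hH : Differentiable ℝ H)
    (heven : ∀ q p : EuclideanSpace ℝ (Fin m), H (q, -p) = H (q, p))
    (gradq gradp :
      EuclideanSpace ℝ (Fin m) → EuclideanSpace ℝ (Fin m) → EuclideanSpace ℝ (Fin m))
    (hgradq : ∀ q p, gradq q p = gradient (fun q'' => H (q'', p)) q)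
    (hgradp : ∀ q p, gradp q p = gradient (fun p'' => H (q, p'')) p)
    (ε : ℝ) (q p q' p' : EuclideanSpace ℝ (Fin m))
    (h1 : q' = q + ε • gradp ((2 : ℝ)⁻¹ • (q + q')) ((2 : ℝ)⁻¹ • (p + p')))
    (h2 : p' = p - ε • gradq ((2 : ℝ)⁻¹ • (q + q')) ((2 : ℝ)⁻¹ • (p + p'))) :
    q = q' + ε • gradp ((2 : ℝ)⁻¹ • (q' + q)) ((2 : ℝ)⁻¹ • (-p' + -p)) ∧
    -p = -p' - ε • gradq ((2 : ℝ)⁻¹ • (q' + q)) ((2 : ℝ)⁻¹ • (-p' + -p)) :=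
  implicit_midpoint_momentum_negation_symmetry_general m H heven gradq gradp hgradq hgradp ε q p q'
    p' h1 h2
end

section
/- Let n be a natural number, let J be an n×n real skew-symmetric matrix (Jᵀ = −J), and let ε ∈ ℝ. Then 1 − (ε/2) • J is invertible, and for all z, z' ∈ Fin n → ℝ, the implicit midpoint equation z' = z + ε • J.mulVec ((z + z') / 2) holds if and only if z' = ((1 − (ε/2) • J)⁻¹ * (1 + (ε/2) • J)).mulVec z. -/
open Matrix

/-- **Appendix B of the paper.** For the linear system `ż = Jz` with `J` skew-symmetric,
`1 - (ε/2) • J` is invertible and the implicit midpoint step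
`z' = z + ε J ((z + z')/2)` is exactly the linear map given by the Cayley transform
`(1 - (ε/2)J)⁻¹ (1 + (ε/2)J)`. -/
theorem implicit_midpoint_step_is_cayley_transform
    (n : ℕ) (J : Matrix (Fin n) (Fin n) ℝ) (hJ : Jᵀ = -J) (ε : ℝ) :
    IsUnit (1 - (ε / 2) • J) ∧
    ∀ z z' : Fin n → ℝ,
      (z' = z + ε • J.mulVec ((z + z') / 2) ↔
        z' = ((1 - (ε / 2) • J)⁻¹ * (1 + (ε / 2) • J)).mulVec z) := by
  set c : ℝ := ε / 2 with hc
  set A : Matrix (Fin n) (Fin n) ℝ := 1 - c • J with hA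
  set B : Matrix (Fin n) (Fin n) ℝ := 1 + c • J with hB
  have hAT : Aᵀ = B := by
    simp [hA, hB, transpose_sub, transpose_smul, hJ, sub_neg_eq_add]
  -- AᵀA = 1 + c² JᵀJ is positive definite
  have hAtA : Aᵀ * A = 1 + (c • J)ᵀ * (c • J) := by
    have hJJ : J * J = -(Jᵀ * J) := by rw [hJ, neg_mul, neg_neg]
    have hBA : B * A = 1 - (c * c) • (J * J) := by
      simp only [hA, hB, mul_sub, add_mul, one_mul, mul_one, smul_mul_smul_comm, smul_smul]
      abel
    rw [hAT, hBA, hJJ, smul_neg, sub_neg_eq_add, transpose_smul,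
      smul_mul_smul_comm]
  have hAconjT : Aᵀ = Aᴴ := by
    simp [conjTranspose, Matrix.map_id']
    rfl
  have hposdef : (Aᵀ * A).PosDef := by
    rw [hAtA]
    have h1 : (1 : Matrix (Fin n) (Fin n) ℝ).PosDef := Matrix.PosDef.one
    have hct : (c • J)ᴴ = (c • J)ᵀ := by
      ext i j; simp [conjTranspose_apply]
    have h2 : ((c • J)ᵀ * (c • J)).PosSemidef := by
      have := Matrix.posSemidef_conjTranspose_mul_self (c • J)
      rwa [hct] at this
    exact h1.add_posSemidef h2
  have hdetA : IsUnit A.det := by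
    have := hposdef.det_pos
    rw [Matrix.det_mul, Matrix.det_transpose] at this
    have : A.det ≠ 0 := fun h => by simp [h] at this
    exact isUnit_iff_ne_zero.mpr this
  have hAunit : IsUnit A := (Matrix.isUnit_iff_isUnit_det A).mpr hdetA
  refine ⟨hAunit, fun z z' => ?_⟩
  have hinv : A⁻¹ * A = 1 := Matrix.nonsing_inv_mul A hdetA
  have hAinv : A * A⁻¹ = 1 := Matrix.mul_nonsing_inv A hdetA
  -- the midpoint equation is equivalent to A z' = B z
  have key : (z' = z + ε • J.mulVec ((z + z') / 2)) ↔ A.mulVec z' = B.mulVec z := by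
    have hhalf : (z + z') / 2 = (2 : ℝ)⁻¹ • (z + z') := by
      funext i; simp [div_eq_inv_mul, mul_comm]
    rw [hhalf]
    have hec : ε * (2 : ℝ)⁻¹ = c := by rw [hc]; ring
    have hrhs : ε • J.mulVec ((2 : ℝ)⁻¹ • (z + z')) = c • J.mulVec z + c • J.mulVec z' := by
      rw [mulVec_smul, mulVec_add, smul_add, smul_add, smul_smul, smul_smul, hec]
    rw [hrhs]
    have hAz' : A.mulVec z' = z' - c • J.mulVec z' := by
      simp [hA, sub_mulVec, smul_mulVec]
    have hBz : B.mulVec z = z + c • J.mulVec z := by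
      simp [hB, add_mulVec, smul_mulVec]
    rw [hAz', hBz, sub_eq_iff_eq_add, add_assoc]
  rw [key]
  constructor
  · intro h
    rw [← Matrix.mulVec_mulVec, ← h, Matrix.mulVec_mulVec, hinv, one_mulVec]
  · intro h
    rw [h, Matrix.mulVec_mulVec, ← Matrix.mul_assoc, hAinv, one_mul]
end

section
/- Let n be a natural number, let J be an n×n real skew-symmetric matrix (Jᵀ = −J), let c ∈ ℝ, and let Q = (1 − c • J)⁻¹ * (1 + c • J). Then every complex eigenvalue of Q has modulus one: every root λ ∈ ℂ of the characteristic polynomial of the complexification Q.map Complex.ofReal satisfies Complex.abs λ = 1. -/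
/-!
For skew-Hermitian `K`, `(1 - K)ᴴ (1 - K) = 1 + Kᴴ K` is positive definite, so `1 - K` and
likewise `1 + K` are invertible. These two factors commute and are each other's adjoints, which
makes the Cayley transform `(1 - K)⁻¹ (1 + K)` unitary. A real orthogonal matrix stays unitary over
`ℂ`, and the spectrum of a unitary element of a C⋆-algebra lies on the unit circle.
-/

open Matrix

namespace Matrix

variable {ι : Type*} [Fintype ι] [DecidableEq ι]

section RCLike

open scoped ComplexOrder

variable {𝕜 : Type*} [RCLike 𝕜] {K : Matrix ι ι 𝕜}

theorem isUnit_one_sub_of_conjTranspose_eq_neg (hK : Kᴴ = -K) : IsUnit (1 - K) := by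
  have hgram : (1 - K)ᴴ * (1 - K) = 1 + Kᴴ * K := by
    rw [conjTranspose_sub, conjTranspose_one, hK]
    noncomm_ring
  have hpos : ((1 - K)ᴴ * (1 - K)).PosDef :=
    hgram ▸ PosDef.one.add_posSemidef (posSemidef_conjTranspose_mul_self K)
  exact isUnit_of_mul_isUnit_right hpos.isUnit

theorem cayley_mem_unitary (hK : Kᴴ = -K) : (1 - K)⁻¹ * (1 + K) ∈ unitary (Matrix ι ι 𝕜) := by
  have hA : IsUnit (1 - K) := isUnit_one_sub_of_conjTranspose_eq_neg hK
  have hB : IsUnit (1 + K) := by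
    simpa [sub_eq_add_neg] using
      isUnit_one_sub_of_conjTranspose_eq_neg (K := -K) (by rw [conjTranspose_neg, hK])
  have hAB : Commute (1 - K) (1 + K) := by
    simp only [Commute, SemiconjBy]
    noncomm_ring
  have hcomm : (1 - K)⁻¹ * (1 + K) = (1 + K) * (1 - K)⁻¹ := by
    simpa [coe_units_inv] using (hAB.units_inv_left (u := hA.unit)).eq
  have hAH : (1 - K)ᴴ = 1 + K := by rw [conjTranspose_sub, conjTranspose_one, hK, sub_neg_eq_add]
  have hBH : (1 + K)ᴴ = 1 - K := by rw [conjTranspose_add, conjTranspose_one, hK, ← sub_eq_add_neg]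
  refine mem_unitaryGroup_iff'.mpr ?_
  calc star ((1 - K)⁻¹ * (1 + K)) * ((1 - K)⁻¹ * (1 + K))
      = (1 - K) * (1 + K)⁻¹ * ((1 + K) * (1 - K)⁻¹) := by
        rw [star_eq_conjTranspose, conjTranspose_mul, conjTranspose_nonsing_inv, hAH, hBH, hcomm]
    _ = 1 := by
        rw [mul_assoc, nonsing_inv_mul_cancel_left _ _ ((isUnit_iff_isUnit_det _).mp hB),
          mul_nonsing_inv _ ((isUnit_iff_isUnit_det _).mp hA)]

open scoped Matrix.Norms.L2Operator in
theorem norm_eq_one_of_mem_spectrum_of_mem_unitary {U : Matrix ι ι 𝕜}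
    (hU : U ∈ unitary (Matrix ι ι 𝕜)) {z : 𝕜} (hz : z ∈ spectrum 𝕜 U) : ‖z‖ = 1 :=
  spectrum.norm_eq_one_of_unitary hU hz

end RCLike

theorem map_mem_unitary {R S : Type*} [CommRing R] [StarRing R] [CommRing S] [StarRing S]
    (f : R →+* S) (hf : ∀ x, f (star x) = star (f x)) {U : Matrix ι ι R}
    (hU : U ∈ unitary (Matrix ι ι R)) : U.map f ∈ unitary (Matrix ι ι S) := by
  refine mem_unitaryGroup_iff'.mpr ?_
  rw [star_eq_conjTranspose, ← conjTranspose_map f hf, ← Matrix.map_mul, ← star_eq_conjTranspose,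
    Unitary.star_mul_self_of_mem hU, Matrix.map_one _ f.map_zero f.map_one]

end Matrix

/-- **Appendix B of the paper.** Every complex eigenvalue of the Cayley transform
`Q = (1 - c • J)⁻¹ (1 + c • J)` of a multiple of a skew-symmetric real matrix has
modulus one: every root of the characteristic polynomial of the complexification of `Q`
lies on the unit circle. -/
theorem cayley_transform_eigenvalues_unit_modulus
    (n : ℕ) (J : Matrix (Fin n) (Fin n) ℝ) (hJ : Jᵀ = -J) (c : ℝ)
    (Q : Matrix (Fin n) (Fin n) ℝ) (hQ : Q = (1 - c • J)⁻¹ * (1 + c • J))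
    (lam : ℂ) (hlam : ((Q.map Complex.ofReal).charpoly).IsRoot lam) :
    ‖lam‖ = 1 := by
  have hskew : (c • J)ᴴ = -(c • J) := by
    rw [conjTranspose_eq_transpose_of_trivial, transpose_smul, hJ, smul_neg]
  have hQ_unitary : Q ∈ unitary (Matrix (Fin n) (Fin n) ℝ) := hQ ▸ cayley_mem_unitary hskew
  have hQℂ_unitary : Q.map Complex.ofReal ∈ unitary (Matrix (Fin n) (Fin n) ℂ) :=
    map_mem_unitary Complex.ofRealHom (fun x => by simp) hQ_unitary
  exact norm_eq_one_of_mem_spectrum_of_mem_unitary hQℂ_unitary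
    (mem_spectrum_of_isRoot_charpoly hlam)
end

section
/- Let ω > 0 and ε > 0 be real numbers, let J = !![0, 1; −ω^2, 0] be the coefficient matrix of the harmonic oscillator q̇ = p, ṗ = −ω²q, and let R = (1 − (ε/2) • J)⁻¹ * (1 + (ε/2) • J) be the implicit midpoint step matrix. Then: (a) 1 − (ε/2) • J is invertible; (b) det R = 1; (c) the characteristic polynomial of R.map Complex.ofReal has two distinct roots, each of modulus one (in particular neither root is repeated). Hence the implicit midpoint integrator is stable for the harmonic oscillator for every step size ε > 0. -/
/-!
With `h = ε / 2`, the identity `J * J = -ω² • 1` gives `(1 - hJ)(1 + hJ) = (1 + h²ω²) • 1`, so the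
Cayley transform `R = (1 - hJ)⁻¹(1 + hJ)` equals `((1 - h²ω²) • 1 + 2h • J) / (1 + h²ω²)`. Hence
`det R = 1` and `tr R = 2(1 - h²ω²)/(1 + h²ω²)` lies strictly between `-2` and `2`. The characteristic
polynomial `X² - (tr R) X + 1` then has negative discriminant: its roots are two distinct complex
conjugates whose product is `1`, so both lie on the unit circle.
-/

open Matrix Polynomial ComplexConjugate

theorem Polynomial.X_sub_C_mul_X_sub_C_conj (z : ℂ) :
    (X - C z) * (X - C (conj z)) =
      X ^ 2 - C ((2 * z.re : ℝ) : ℂ) * X + C (Complex.normSq z : ℂ) := by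
  rw [← Complex.add_conj, ← Complex.mul_conj, C_add, C_mul]
  ring

theorem Complex.exists_normSq_eq_one_of_abs_two_mul_re_lt_two {t : ℝ} (ht : |t| < 2) :
    ∃ z : ℂ, Complex.normSq z = 1 ∧ 2 * z.re = t ∧ z.im ≠ 0 := by
  have hpos : 0 < 1 - (t / 2) ^ 2 := by
    have := sq_lt_sq' (abs_lt.mp ht).1 (abs_lt.mp ht).2
    nlinarith
  refine ⟨⟨t / 2, √(1 - (t / 2) ^ 2)⟩, ?_, by ring, (Real.sqrt_pos.mpr hpos).ne'⟩
  rw [Complex.normSq_mk, Real.mul_self_sqrt hpos.le]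
  ring

theorem Matrix.exists_charpoly_map_ofReal_eq_of_det_eq_one_of_abs_trace_lt_two
    {M : Matrix (Fin 2) (Fin 2) ℝ} (hdet : M.det = 1) (htr : |M.trace| < 2) :
    ∃ lam₁ lam₂ : ℂ, lam₁ ≠ lam₂ ∧ ‖lam₁‖ = 1 ∧ ‖lam₂‖ = 1 ∧
      (M.map Complex.ofReal).charpoly = (X - C lam₁) * (X - C lam₂) := by
  obtain ⟨z, hnorm, hre, him⟩ := Complex.exists_normSq_eq_one_of_abs_two_mul_re_lt_two htr
  have hz : ‖z‖ = 1 := by rw [Complex.norm_def, hnorm, Real.sqrt_one]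
  refine ⟨z, conj z, fun h => him (Complex.conj_eq_iff_im.mp h.symm), hz,
    (Complex.norm_conj z).trans hz, ?_⟩
  change (M.map Complex.ofRealHom).charpoly = _
  rw [Polynomial.X_sub_C_mul_X_sub_C_conj, hnorm, hre, ← hdet, charpoly_map, charpoly_fin_two]
  simp

theorem Matrix.det_one_add_smul_fin_two {R : Type*} [CommRing R] (s : R)
    (J : Matrix (Fin 2) (Fin 2) R) :
    (1 + s • J).det = 1 + s * J.trace + s ^ 2 * J.det := by
  simp only [det_fin_two, trace_fin_two, add_apply, smul_apply, one_apply_eq, smul_eq_mul,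
    one_apply_ne Fin.zero_ne_one, one_apply_ne Fin.zero_ne_one.symm]
  ring

section CayleyTransform

variable {K : Type*} [Field K] {n : Type*} [Fintype n] [DecidableEq n] {J : Matrix n n K} {c : K}

theorem Matrix.one_sub_smul_mul_one_add_smul_of_mul_self_eq (hJ : J * J = -c • 1) (h : K) :
    (1 - h • J) * (1 + h • J) = (1 + h ^ 2 * c) • 1 := by
  rw [sub_mul, mul_add, mul_add, smul_mul_smul_comm, hJ]
  simp only [mul_one, one_mul, smul_smul, add_smul, one_smul]
  module

theorem Matrix.inv_one_sub_smul_of_mul_self_eq (hJ : J * J = -c • 1) {h : K}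
    (hd : 1 + h ^ 2 * c ≠ 0) : (1 - h • J)⁻¹ = (1 + h ^ 2 * c)⁻¹ • (1 + h • J) := by
  apply inv_eq_right_inv
  rw [mul_smul_comm, one_sub_smul_mul_one_add_smul_of_mul_self_eq hJ, smul_smul,
    inv_mul_cancel₀ hd, one_smul]

theorem Matrix.inv_one_sub_smul_mul_one_add_smul_of_mul_self_eq (hJ : J * J = -c • 1) {h : K}
    (hd : 1 + h ^ 2 * c ≠ 0) : (1 - h • J)⁻¹ * (1 + h • J) =
      (1 + h ^ 2 * c)⁻¹ • ((1 - h ^ 2 * c) • 1 + (2 * h) • J) := by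
  rw [inv_one_sub_smul_of_mul_self_eq hJ hd, smul_mul_assoc]
  congr 1
  rw [mul_add, add_mul, add_mul, smul_mul_smul_comm, hJ]
  simp only [mul_one, one_mul, smul_smul]
  module

end CayleyTransform

theorem abs_one_sub_div_one_add_lt_one {x : ℝ} (hx : 0 < x) : |(1 - x) / (1 + x)| < 1 := by
  rw [abs_div, abs_of_pos (by linarith : 0 < 1 + x), div_lt_one (by linarith), abs_lt]
  constructor <;> linarith

theorem harmonicOscillator_mul_self {R : Type*} [CommRing R] (ω : R) :
    !![0, 1; -ω ^ 2, 0] * !![0, 1; -ω ^ 2, 0] = -(ω ^ 2) • (1 : Matrix (Fin 2) (Fin 2) R) := by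
  ext i j
  fin_cases i <;> fin_cases j <;> simp

/-- **Implicit midpoint half of Proposition D.1 of the paper.** For the harmonic
oscillator `q̇ = p, ṗ = −ω²q` with coefficient matrix `J = [[0,1],[−ω²,0]]`, the
implicit midpoint step matrix `R = (1 − (ε/2)J)⁻¹(1 + (ε/2)J)` is well defined
(`1 − (ε/2)J` invertible), has unit determinant, and its characteristic polynomial has
two distinct roots each of modulus one: the implicit midpoint integrator is stable for
every step size `ε > 0`. -/
theorem implicit_midpoint_stable_harmonic_oscillator
    (ω ε : ℝ) (hω : 0 < ω) (hε : 0 < ε)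
    (J : Matrix (Fin 2) (Fin 2) ℝ) (hJ : J = !![0, 1; -ω ^ 2, 0])
    (R : Matrix (Fin 2) (Fin 2) ℝ)
    (hR : R = (1 - (ε / 2) • J)⁻¹ * (1 + (ε / 2) • J)) :
    IsUnit (1 - (ε / 2) • J) ∧
    R.det = 1 ∧
    ∃ lam₁ lam₂ : ℂ, lam₁ ≠ lam₂ ∧ ‖lam₁‖ = 1 ∧ ‖lam₂‖ = 1 ∧
      (R.map Complex.ofReal).charpoly = (X - C lam₁) * (X - C lam₂) := by
  set h := ε / 2
  have hJJ : J * J = -(ω ^ 2) • 1 := hJ ▸ harmonicOscillator_mul_self ω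
  have htrJ : J.trace = 0 := by simp [hJ, trace_fin_two]
  have hdet_add (s : ℝ) : (1 + s • J).det = 1 + s ^ 2 * ω ^ 2 := by
    rw [det_one_add_smul_fin_two, htrJ, hJ, det_fin_two_of]
    ring
  have hdet_sub : (1 - h • J).det = 1 + h ^ 2 * ω ^ 2 := by
    rw [sub_eq_add_neg, ← neg_smul, hdet_add, neg_sq]
  have hx : 0 < h ^ 2 * ω ^ 2 := by positivity
  have hd : 1 + h ^ 2 * ω ^ 2 ≠ 0 := by positivity
  have hdetR : R.det = 1 := by
    rw [hR, det_mul, det_nonsing_inv, hdet_sub, hdet_add, Ring.inverse_eq_inv', inv_mul_cancel₀ hd]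
  have htrR : R.trace = 2 * ((1 - h ^ 2 * ω ^ 2) / (1 + h ^ 2 * ω ^ 2)) := by
    rw [hR, inv_one_sub_smul_mul_one_add_smul_of_mul_self_eq hJJ hd]
    simp only [smul_add, trace_add, trace_smul, trace_one, Fintype.card_fin, Nat.cast_ofNat,
      smul_eq_mul, htrJ, mul_zero, add_zero]
    ring
  refine ⟨(isUnit_iff_isUnit_det _).mpr (hdet_sub ▸ hd.isUnit), hdetR, ?_⟩
  apply exists_charpoly_map_ofReal_eq_of_det_eq_one_of_abs_trace_lt_two hdetR
  rw [htrR, abs_mul, abs_two]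
  linarith [abs_one_sub_div_one_add_lt_one hx]
end

section
/- Let n be a natural number, let π : (Fin n → ℝ) → ℝ be measurable with π z > 0 for all z, and let P : (Fin n → ℝ) → (Fin n → ℝ) be a measurable map that preserves Lebesgue measure (MeasurePreserving P volume volume) and is an involution (P ∘ P = id). Then for all measurable sets A, B ⊆ (Fin n → ℝ): ∫⁻ z in A ∩ P⁻¹' B, ENNReal.ofReal (π z * min 1 (π (P z) / π z)) ∂volume = ∫⁻ z in B ∩ P⁻¹' A, ENNReal.ofReal (π z * min 1 (π (P z) / π z)) ∂volume. That is, the Metropolis–Hastings transition built from the deterministic proposal P and acceptance probability min{1, π(P z)/π(z)} satisfies detailed balance with respect to the density π. -/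
open MeasureTheory

/-- **Appendix H of the paper.** The Metropolis–Hastings transition built from a
deterministic, measure-preserving, involutive proposal `P` and acceptance probability
`min 1 (π (P z) / π z)` satisfies detailed balance with respect to the density `π`. -/
theorem metropolis_detailed_balance_involutive_proposal
    (n : ℕ) (π : (Fin n → ℝ) → ℝ) (hπm : Measurable π) (hπpos : ∀ z, 0 < π z)
    (P : (Fin n → ℝ) → (Fin n → ℝ))
    (hP : MeasurePreserving P (volume : Measure (Fin n → ℝ)) volume)
    (hPinv : P ∘ P = id)
    (A B : Set (Fin n → ℝ)) (hA : MeasurableSet A) (hB : MeasurableSet B) :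
    ∫⁻ z in A ∩ P ⁻¹' B, ENNReal.ofReal (π z * min 1 (π (P z) / π z)) ∂volume =
    ∫⁻ z in B ∩ P ⁻¹' A, ENNReal.ofReal (π z * min 1 (π (P z) / π z)) ∂volume := by
  have hPP : ∀ z, P (P z) = z := fun z => congrFun hPinv z
  -- rewrite integrand as min (π z) (π (P z))
  have hkey : ∀ z, π z * min 1 (π (P z) / π z) = min (π z) (π (P z)) := by
    intro z
    rw [mul_min_of_nonneg _ _ (hπpos z).le, mul_one,
      mul_div_cancel₀ _ (hπpos z).ne']
  simp only [hkey]
  have hf : Measurable fun z => ENNReal.ofReal (min (π z) (π (P z))) :=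
    (ENNReal.measurable_ofReal.comp (hπm.min (hπm.comp hP.measurable)))
  have hsym : ∀ z, min (π (P z)) (π (P (P z))) = min (π z) (π (P z)) := by
    intro z; rw [hPP, min_comm]
  calc ∫⁻ z in A ∩ P ⁻¹' B, ENNReal.ofReal (min (π z) (π (P z))) ∂volume
      = ∫⁻ z in P ⁻¹' (B ∩ P ⁻¹' A),
          ENNReal.ofReal (min (π (P z)) (π (P (P z)))) ∂volume := by
        have hset : A ∩ P ⁻¹' B = P ⁻¹' (B ∩ P ⁻¹' A) := by
          ext z; simp [Set.mem_preimage, hPP z, and_comm]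
        rw [hset]; exact lintegral_congr fun z => by rw [hsym]
    _ = ∫⁻ z in B ∩ P ⁻¹' A, ENNReal.ofReal (min (π z) (π (P z))) ∂volume :=
        hP.setLIntegral_comp_preimage (hB.inter (hP.measurable hA)) hf
end
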